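/- For k ∈ ℕ let M(k) ⊂ ℂ[x] be the subspace of polynomials divisible by x^k. Assume l(k) and d(k) are both not identically zero as polynomials in k. Then P maps M(k)^N into M(k−n)^N for all k ≥ n, and for all sufficiently large k this map P : M(k)^N → M(k−n)^N is injective and its cokernel has dimension (n − n')·N over ℂ. -/

import Mathlib

open Polynomial PowerSeries

noncomputable section

/-- ν(A): minimum over the entries of a polynomial matrix of the order of vanishing
at `x = 0` (`⊤` for the zero matrix), as a natural number via `toNat`. -/
def matNu {N : ℕ} (A : Matrix (Fin N) (Fin N) (Polynomial ℂ)) : ℕ :=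
  (⨅ i, ⨅ j, (A i j).trailingDegree).toNat

/-- The coefficient matrix `A^{ν(A)}` of `x^{ν(A)}` in `A`. -/
def trailMat {N : ℕ} (A : Matrix (Fin N) (Fin N) (Polynomial ℂ)) : Matrix (Fin N) (Fin N) ℂ :=
  fun i j => (A i j).coeff (matNu A)

open Classical in
/-- The matrix `L(k) = Σ_{j ∈ J} k(k-1)⋯(k-j+1) A_j^{n_j}`, where
`J = {j : A_j ≠ 0 ∧ j - ν(A_j) = n}`. -/
def Lmat {N m : ℕ} (A : Fin (m + 1) → Matrix (Fin N) (Fin N) (Polynomial ℂ)) (n : ℤ)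
    (k : ℂ) : Matrix (Fin N) (Fin N) ℂ :=
  ∑ j : Fin (m + 1),
    if A j ≠ 0 ∧ (j : ℤ) - matNu (A j) = n then
      (∏ t ∈ Finset.range (j : ℕ), (k - t)) • trailMat (A j)
    else 0

/-- The differential operator `P = Σ_{i=0}^m A_i(x) (d/dx)^i` acting ℂ-linearly on
`ℂ[[x]]^N`. -/
def Pop {N m : ℕ} (A : Fin (m + 1) → Matrix (Fin N) (Fin N) (Polynomial ℂ)) :
    Module.End ℂ (Fin N → PowerSeries ℂ) :=
  ∑ i : Fin (m + 1),
    LinearMap.pi fun b : Fin N =>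
      ∑ c : Fin N,
        (LinearMap.mulLeft ℂ ((A i b c : Polynomial ℂ) : PowerSeries ℂ) ∘ₗ
            (((PowerSeries.derivative ℂ).toLinearMap : Module.End ℂ (PowerSeries ℂ)) ^ (i : ℕ))) ∘ₗ
          LinearMap.proj c

/-- A formal power series is convergent if it has positive radius of convergence. -/
def PSConvergent (f : PowerSeries ℂ) : Prop :=
  ∃ r : ℝ, 0 < r ∧ Summable fun j : ℕ => ‖PowerSeries.coeff j f‖ * r ^ j

end

noncomputable section

/-- `d°A`: the maximum over the entries of a polynomial matrix of their degrees
(as a natural number; meaningful for `A ≠ 0`). -/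
def matDeg {N : ℕ} (A : Matrix (Fin N) (Fin N) (Polynomial ℂ)) : ℕ :=
  Finset.univ.sup fun p : Fin N × Fin N => (A p.1 p.2).natDegree

/-- The coefficient matrix `A^{d°A}` of `x^{d°A}` in `A`. -/
def leadMat {N : ℕ} (A : Matrix (Fin N) (Fin N) (Polynomial ℂ)) : Matrix (Fin N) (Fin N) ℂ :=
  fun i j => (A i j).coeff (matDeg A)

open Classical in
/-- The matrix `D(k) = Σ_{j ∈ J'} k(k-1)⋯(k-j+1) A_j^{d_j}`, where
`J' = {j : A_j ≠ 0 ∧ j - d°(A_j) = n'}`. -/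
def Dmat {N m : ℕ} (A : Fin (m + 1) → Matrix (Fin N) (Fin N) (Polynomial ℂ)) (n' : ℤ)
    (k : ℂ) : Matrix (Fin N) (Fin N) ℂ :=
  ∑ j : Fin (m + 1),
    if A j ≠ 0 ∧ (j : ℤ) - matDeg (A j) = n' then
      (∏ t ∈ Finset.range (j : ℕ), (k - t)) • leadMat (A j)
    else 0

/-- The differential operator `P = Σ_{i=0}^m A_i(x) (d/dx)^i` acting ℂ-linearly on
`ℂ[x]^N`. -/
def PopPoly {N m : ℕ} (A : Fin (m + 1) → Matrix (Fin N) (Fin N) (Polynomial ℂ)) :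
    Module.End ℂ (Fin N → Polynomial ℂ) :=
  ∑ i : Fin (m + 1),
    LinearMap.pi fun b : Fin N =>
      ∑ c : Fin N,
        (LinearMap.mulLeft ℂ (A i b c) ∘ₗ
            ((Polynomial.derivative : Module.End ℂ (Polynomial ℂ)) ^ (i : ℕ))) ∘ₗ
          LinearMap.proj c

end

/-- `M(k)^N`: the subspace of `ℂ[x]^N` of vectors of polynomials divisible by `x^k`. -/
noncomputable def Msub (N : ℕ) (k : ℕ) : Submodule ℂ (Fin N → Polynomial ℂ) where
  carrier := {u | ∀ (b : Fin N) (j : ℕ), j < k → (u b).coeff j = 0}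
  add_mem' := by
    intro u v hu hv b j hj
    simp [Polynomial.coeff_add, hu b j hj, hv b j hj]
  zero_mem' := by intro b j hj; simp
  smul_mem' := by
    intro c u hu b j hj
    simp [hu b j hj]

/-!
If the lowest nonzero coefficient vector of `u ∈ M(k)^N` sits in degree `j`, then `P u` has
no terms below degree `j - n` and its coefficient of `x^(j-n)` is `L(j) u_j`; dually, if the top
coefficient vector of `u` sits in degree `J`, then `P u` has no terms above degree `J - n'` and
its coefficient of `x^(J-n')` is `D(J) u_J`. As `l` and `d` are nonzero polynomials, `L(j)` and
`D(j)` are invertible for all large integers `j`. The first fact makes `P` injective on `M(k)^N`.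
The second shows that `P u` has a nonzero coefficient in degree `≥ k - n'` when `u ≠ 0`, and
lets one cancel, from the top down, every coefficient of degree `≥ k - n'` of a vector of
`M(k-n)^N` by subtracting an element of `P(M(k)^N)`. So the monomial vectors `x^j e_c` with
`k - n ≤ j < k - n'` map to a basis of the cokernel.
-/
open Polynomial Finset Filter
open scoped Matrix

section IterateDerivative

variable {R : Type*} [Semiring R] {a u : R[X]} {i d : ℕ}

theorem coeff_mul_iterate_derivative (a u : R[X]) (i d : ℕ) :
    (a * derivative^[i] u).coeff d =
      ∑ x ∈ antidiagonal d, a.coeff x.1 * ((x.2 + i).descFactorial i • u.coeff (x.2 + i)) := by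
  simp only [Polynomial.coeff_mul, Polynomial.coeff_iterate_derivative]

theorem coeff_mul_iterate_derivative_eq_of_unique {s j : ℕ} (hsj : s + j = d + i)
    (h : ∀ x ∈ antidiagonal d,
      a.coeff x.1 * ((x.2 + i).descFactorial i • u.coeff (x.2 + i)) ≠ 0 → x.1 = s ∧ x.2 + i = j) :
    (a * derivative^[i] u).coeff d = a.coeff s * (j.descFactorial i • u.coeff j) := by
  rw [coeff_mul_iterate_derivative]
  by_cases hij : i ≤ j
  · have hmem : (s, j - i) ∈ antidiagonal d := by rw [HasAntidiagonal.mem_antidiagonal]; omega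
    rw [sum_eq_single_of_mem _ hmem, Nat.sub_add_cancel hij]
    intro x hx hne
    by_contra hx0
    obtain ⟨h₁, h₂⟩ := h x hx hx0
    exact hne (Prod.ext h₁ (show x.2 = j - i by omega))
  · rw [Nat.descFactorial_eq_zero_iff_lt.2 (by omega), zero_smul, mul_zero]
    refine sum_eq_zero fun x hx => by_contra fun hx0 => ?_
    have := (h x hx hx0).2
    omega

theorem le_of_coeff_mul_smul_ne_zero {ν k s t : ℕ} (ha : ∀ s < ν, a.coeff s = 0)
    (hu : ∀ j < k, u.coeff j = 0)
    (h : a.coeff s * ((t + i).descFactorial i • u.coeff (t + i)) ≠ 0) :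
    ν ≤ s ∧ k ≤ t + i := by
  constructor <;> by_contra! hlt
  · exact h (by rw [ha s hlt, zero_mul])
  · exact h (by rw [hu _ hlt, smul_zero, mul_zero])

theorem le_natDegree_of_coeff_mul_smul_ne_zero {s t : ℕ}
    (h : a.coeff s * ((t + i).descFactorial i • u.coeff (t + i)) ≠ 0) :
    s ≤ a.natDegree ∧ t + i ≤ u.natDegree :=
  ⟨le_natDegree_of_ne_zero (left_ne_zero_of_mul h),
    le_natDegree_of_ne_zero fun hu => h (by rw [hu, smul_zero, mul_zero])⟩

theorem coeff_mul_iterate_derivative_eq_zero_of_lt_bot {ν k : ℕ} (ha : ∀ s < ν, a.coeff s = 0)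
    (hu : ∀ j < k, u.coeff j = 0) (hd : (d : ℤ) < ν + k - i) :
    (a * derivative^[i] u).coeff d = 0 := by
  rw [coeff_mul_iterate_derivative]
  refine sum_eq_zero fun x hx => by_contra fun h => ?_
  have := le_of_coeff_mul_smul_ne_zero ha hu h
  rw [HasAntidiagonal.mem_antidiagonal] at hx
  omega

theorem coeff_mul_iterate_derivative_of_eq_bot {ν k : ℕ} (ha : ∀ s < ν, a.coeff s = 0)
    (hu : ∀ j < k, u.coeff j = 0) (hd : (d : ℤ) = ν + k - i) :
    (a * derivative^[i] u).coeff d = a.coeff ν * (k.descFactorial i • u.coeff k) :=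
  coeff_mul_iterate_derivative_eq_of_unique (by omega) fun x hx h => by
    have := le_of_coeff_mul_smul_ne_zero ha hu h
    rw [HasAntidiagonal.mem_antidiagonal] at hx
    omega

theorem coeff_mul_iterate_derivative_eq_zero_of_top_lt {δ J : ℕ} (ha : a.natDegree ≤ δ)
    (hu : u.natDegree ≤ J) (hd : (δ + J - i : ℤ) < d) :
    (a * derivative^[i] u).coeff d = 0 := by
  rw [coeff_mul_iterate_derivative]
  refine sum_eq_zero fun x hx => by_contra fun h => ?_
  have := le_natDegree_of_coeff_mul_smul_ne_zero h
  rw [HasAntidiagonal.mem_antidiagonal] at hx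
  omega

theorem coeff_mul_iterate_derivative_of_eq_top {δ J : ℕ} (ha : a.natDegree ≤ δ)
    (hu : u.natDegree ≤ J) (hd : (d : ℤ) = δ + J - i) :
    (a * derivative^[i] u).coeff d = a.coeff δ * (J.descFactorial i • u.coeff J) :=
  coeff_mul_iterate_derivative_eq_of_unique (by omega) fun x hx h => by
    have := le_natDegree_of_coeff_mul_smul_ne_zero h
    rw [HasAntidiagonal.mem_antidiagonal] at hx
    omega

end IterateDerivative

section CoeffSupport

variable {ι R : Type*} [Fintype ι] [Semiring R] {u : ι → R[X]}

def coeffSupport (u : ι → R[X]) : Finset ℕ := univ.biUnion fun c => (u c).support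

theorem mem_coeffSupport {j : ℕ} : j ∈ coeffSupport u ↔ ∃ c, (u c).coeff j ≠ 0 := by
  simp [coeffSupport]

theorem coeffSupport_nonempty (hu : u ≠ 0) : (coeffSupport u).Nonempty := by
  obtain ⟨c, hc⟩ := Function.ne_iff.1 hu
  exact ⟨_, mem_coeffSupport.2 ⟨c, leadingCoeff_ne_zero.2 hc⟩⟩

theorem exists_forall_lt_coeff_eq_zero_and_ne_zero (hu : u ≠ 0) :
    ∃ j, (∀ c, ∀ i < j, (u c).coeff i = 0) ∧ (fun c => (u c).coeff j) ≠ 0 := by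
  have hs := coeffSupport_nonempty hu
  obtain ⟨c₀, hc₀⟩ := mem_coeffSupport.1 ((coeffSupport u).min'_mem hs)
  refine ⟨_, fun c i hi => by_contra fun h => ?_, fun h => hc₀ (congrFun h c₀)⟩
  exact ((coeffSupport u).min'_le i (mem_coeffSupport.2 ⟨c, h⟩)).not_gt hi

theorem exists_forall_natDegree_le_and_ne_zero (hu : u ≠ 0) :
    ∃ j, (∀ c, (u c).natDegree ≤ j) ∧ (fun c => (u c).coeff j) ≠ 0 := by
  have hs := coeffSupport_nonempty hu
  obtain ⟨c₀, hc₀⟩ := mem_coeffSupport.1 ((coeffSupport u).max'_mem hs)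
  refine ⟨_, fun c => natDegree_le_iff_coeff_eq_zero.2 fun i hi => by_contra fun h => ?_,
    fun h => hc₀ (congrFun h c₀)⟩
  exact ((coeffSupport u).le_max' i (mem_coeffSupport.2 ⟨c, h⟩)).not_gt hi

end CoeffSupport

theorem le_of_mem_Msub_of_coeff_ne_zero {N k j : ℕ} {u : Fin N → ℂ[X]} (hu : u ∈ Msub N k)
    (hj : (fun c => (u c).coeff j) ≠ 0) : k ≤ j := by
  by_contra! hjk
  exact hj (funext fun c => hu c j hjk)

section DetEventually

variable {ι κ R : Type*} [CommRing R]

theorem sum_ite_prod_smul_eq_map_eval [Fintype κ] (p : κ → Prop) [DecidablePred p] (w : κ → ℕ)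
    (M : κ → Matrix ι ι R) (z : R) :
    ∑ j, (if p j then (∏ t ∈ range (w j), (z - t)) • M j else 0) =
      (∑ j, if p j then descPochhammer R (w j) • (M j).map Polynomial.C else 0).map (eval z) := by
  ext a b
  simp only [Matrix.map_apply, Matrix.sum_apply, eval_finsetSum]
  refine sum_congr rfl fun j _ => ?_
  split_ifs <;> simp [descPochhammer_eval_eq_prod_range]

variable [Fintype ι] [DecidableEq ι] [IsDomain R] [CharZero R]

theorem eventually_det_map_eval_natCast_ne_zero {M : Matrix ι ι R[X]}
    (h : ∃ z, (M.map (eval z)).det ≠ 0) : ∀ᶠ k : ℕ in atTop, (M.map (eval (k : R))).det ≠ 0 := by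
  have hdet (z : R) : (M.map (eval z)).det = M.det.eval z :=
    (RingHom.map_det (evalRingHom z) M).symm
  simp only [hdet] at h ⊢
  obtain ⟨z, hz⟩ := h
  have hM : M.det ≠ 0 := fun h0 => hz (by rw [h0, eval_zero])
  rw [← Nat.cofinite_eq_atTop]
  exact ((finite_setOfPred_isRoot hM).preimage Nat.cast_injective.injOn).eventually_cofinite_notMem

theorem eventually_det_sum_ite_prod_smul_ne_zero [Fintype κ] (p : κ → Prop) [DecidablePred p]
    (w : κ → ℕ) (M : κ → Matrix ι ι R)
    (h : ∃ z : R, (∑ j, if p j then (∏ t ∈ range (w j), (z - t)) • M j else 0).det ≠ 0) :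
    ∀ᶠ k : ℕ in atTop,
      (∑ j, if p j then (∏ t ∈ range (w j), ((k : R) - t)) • M j else 0).det ≠ 0 := by
  simp only [sum_ite_prod_smul_eq_map_eval] at h ⊢
  exact eventually_det_map_eval_natCast_ne_zero h

end DetEventually

section MatrixOrder

variable {N : ℕ} (A : Matrix (Fin N) (Fin N) ℂ[X])

theorem coeff_eq_zero_of_lt_matNu (b c : Fin N) (s : ℕ) (hs : s < matNu A) :
    (A b c).coeff s = 0 :=
  coeff_eq_zero_of_lt_trailingDegree <| (Nat.cast_lt.2 hs).trans_le <|
    (ENat.natCast_toNat_le_self _).trans <| (iInf_le _ b).trans (iInf_le _ c)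

theorem natDegree_le_matDeg (b c : Fin N) : (A b c).natDegree ≤ matDeg A :=
  le_sup (f := fun p : Fin N × Fin N => (A p.1 p.2).natDegree) (mem_univ (b, c))

theorem matNu_le_matDeg (hA : A ≠ 0) : matNu A ≤ matDeg A := by
  obtain ⟨b, c, hbc⟩ : ∃ b c, A b c ≠ 0 := by
    by_contra! h
    exact hA (Matrix.ext h)
  by_contra! hlt
  exact hbc <| leadingCoeff_eq_zero.1 <|
    coeff_eq_zero_of_lt_matNu A b c _ ((natDegree_le_matDeg A b c).trans_lt hlt)

end MatrixOrder

noncomputable def ofWindowCoeffs (N κ δ : ℕ) : (Fin δ × Fin N → ℂ) →ₗ[ℂ] (Fin N → ℂ[X]) where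
  toFun g c := ∑ i : Fin δ, monomial (κ + i) (g (i, c))
  map_add' g h := by
    ext c : 1
    simp [sum_add_distrib]
  map_smul' a g := by
    ext c : 1
    simp [smul_sum, Polynomial.smul_monomial]

section OfWindowCoeffs

variable {N κ δ : ℕ}

theorem coeff_ofWindowCoeffs (g : Fin δ × Fin N → ℂ) (c : Fin N) (j : ℕ) :
    (ofWindowCoeffs N κ δ g c).coeff j = ∑ i : Fin δ, if κ + i = j then g (i, c) else 0 := by
  simp [ofWindowCoeffs, finsetSum_coeff, Polynomial.coeff_monomial]

theorem coeff_ofWindowCoeffs_add (g : Fin δ × Fin N → ℂ) (c : Fin N) (i : Fin δ) :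
    (ofWindowCoeffs N κ δ g c).coeff (κ + i) = g (i, c) := by
  rw [coeff_ofWindowCoeffs, sum_eq_single i (fun i' _ hi' => if_neg fun h => hi' (by omega))
    (by simp), if_pos rfl]

theorem coeff_ofWindowCoeffs_eq_zero (g : Fin δ × Fin N → ℂ) (c : Fin N) {j : ℕ}
    (hj : j < κ ∨ κ + δ ≤ j) : (ofWindowCoeffs N κ δ g c).coeff j = 0 := by
  rw [coeff_ofWindowCoeffs]
  exact sum_eq_zero fun i _ => if_neg (by omega)

theorem ofWindowCoeffs_mem_Msub (g : Fin δ × Fin N → ℂ) : ofWindowCoeffs N κ δ g ∈ Msub N κ :=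
  fun c _ hj => coeff_ofWindowCoeffs_eq_zero g c (Or.inl hj)

theorem ofWindowCoeffs_injective : Function.Injective (ofWindowCoeffs N κ δ) := fun g h hgh =>
  funext fun p => by
    rw [← coeff_ofWindowCoeffs_add (κ := κ) g, ← coeff_ofWindowCoeffs_add (κ := κ) h, hgh]

theorem ofWindowCoeffs_coeff {r : Fin N → ℂ[X]} (hr : r ∈ Msub N κ)
    (htop : ∀ c (j : ℕ), κ + δ ≤ j → (r c).coeff j = 0) :
    ofWindowCoeffs N κ δ (fun p => (r p.2).coeff (κ + p.1)) = r := by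
  ext c j : 2
  by_cases hlow : j < κ
  · rw [coeff_ofWindowCoeffs_eq_zero _ _ (Or.inl hlow), hr c j hlow]
  by_cases hhigh : κ + δ ≤ j
  · rw [coeff_ofWindowCoeffs_eq_zero _ _ (Or.inr hhigh), htop c j hhigh]
  obtain ⟨i, rfl⟩ : ∃ i : Fin δ, κ + i = j := ⟨⟨j - κ, by omega⟩, show κ + (j - κ) = j by omega⟩
  exact coeff_ofWindowCoeffs_add _ c i

end OfWindowCoeffs

namespace PopPoly

variable {N m : ℕ} {A : Fin (m + 1) → Matrix (Fin N) (Fin N) ℂ[X]} {n n' : ℤ} {k κ δ : ℕ}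
  {u : Fin N → ℂ[X]}

theorem coeff_apply (u : Fin N → ℂ[X]) (b : Fin N) (d : ℕ) :
    (PopPoly A u b).coeff d = ∑ i : Fin (m + 1), ∑ c, (A i b c * derivative^[i] (u c)).coeff d := by
  simp only [PopPoly, LinearMap.coe_sum, Finset.sum_apply, LinearMap.pi_apply,
    LinearMap.comp_apply, LinearMap.proj_apply, LinearMap.mulLeft_apply, Module.End.pow_apply,
    finsetSum_coeff]

theorem coeff_eq_zero_of_lt (hn : ∀ i, A i ≠ 0 → (i : ℤ) - matNu (A i) ≤ n) (hu : u ∈ Msub N k)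
    (b : Fin N) {d : ℕ} (hd : (d : ℤ) < k - n) : (PopPoly A u b).coeff d = 0 := by
  rw [coeff_apply]
  refine sum_eq_zero fun i _ => sum_eq_zero fun c _ => ?_
  by_cases hA : A i = 0
  · simp [hA]
  · have := hn i hA
    exact coeff_mul_iterate_derivative_eq_zero_of_lt_bot (coeff_eq_zero_of_lt_matNu _ b c) (hu c)
      (by omega)

theorem mem_Msub (hn : ∀ i, A i ≠ 0 → (i : ℤ) - matNu (A i) ≤ n) (hu : u ∈ Msub N k)
    (hκ : (κ : ℤ) ≤ k - n) : PopPoly A u ∈ Msub N κ :=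
  fun b _ hj => coeff_eq_zero_of_lt hn hu b (by omega)

open Classical in
theorem coeff_eq_Lmat_mulVec (hn : ∀ i, A i ≠ 0 → (i : ℤ) - matNu (A i) ≤ n)
    (hu : u ∈ Msub N k) (b : Fin N) {d : ℕ} (hd : (d : ℤ) = k - n) :
    (PopPoly A u b).coeff d = (Lmat A n k *ᵥ fun c => (u c).coeff k) b := by
  have hterm (i : Fin (m + 1)) (c : Fin N) : (A i b c * derivative^[i] (u c)).coeff d =
      (if A i ≠ 0 ∧ (i : ℤ) - matNu (A i) = n then
        (∏ t ∈ range i, ((k : ℂ) - t)) * trailMat (A i) b c else 0) * (u c).coeff k := by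
    by_cases hA : A i = 0
    · simp [hA]
    by_cases hi : (i : ℤ) - matNu (A i) = n
    · rw [if_pos ⟨hA, hi⟩, coeff_mul_iterate_derivative_of_eq_bot (coeff_eq_zero_of_lt_matNu _ b c)
        (hu c) (by omega), ← descPochhammer_eval_eq_prod_range,
        descPochhammer_eval_eq_descFactorial, nsmul_eq_mul, trailMat]
      ring
    · have := hn i hA
      rw [if_neg fun h => hi h.2, zero_mul]
      exact coeff_mul_iterate_derivative_eq_zero_of_lt_bot (coeff_eq_zero_of_lt_matNu _ b c) (hu c)
        (by omega)
  simp only [coeff_apply, hterm, Matrix.mulVec, dotProduct, Lmat, Matrix.sum_apply, sum_mul]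
  rw [sum_comm]
  refine sum_congr rfl fun c _ => sum_congr rfl fun i _ => ?_
  split_ifs <;> simp [Matrix.smul_apply]

theorem coeff_eq_zero_of_gt (hn' : ∀ i, A i ≠ 0 → n' ≤ (i : ℤ) - matDeg (A i)) {J : ℕ}
    (hu : ∀ c, (u c).natDegree ≤ J) (b : Fin N) {d : ℕ} (hd : (J : ℤ) - n' < d) :
    (PopPoly A u b).coeff d = 0 := by
  rw [coeff_apply]
  refine sum_eq_zero fun i _ => sum_eq_zero fun c _ => ?_
  by_cases hA : A i = 0
  · simp [hA]
  · have := hn' i hA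
    exact coeff_mul_iterate_derivative_eq_zero_of_top_lt (natDegree_le_matDeg _ b c) (hu c)
      (by omega)

open Classical in
theorem coeff_eq_Dmat_mulVec (hn' : ∀ i, A i ≠ 0 → n' ≤ (i : ℤ) - matDeg (A i)) {J : ℕ}
    (hu : ∀ c, (u c).natDegree ≤ J) (b : Fin N) {d : ℕ} (hd : (d : ℤ) = J - n') :
    (PopPoly A u b).coeff d = (Dmat A n' J *ᵥ fun c => (u c).coeff J) b := by
  have hterm (i : Fin (m + 1)) (c : Fin N) : (A i b c * derivative^[i] (u c)).coeff d =
      (if A i ≠ 0 ∧ (i : ℤ) - matDeg (A i) = n' then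
        (∏ t ∈ range i, ((J : ℂ) - t)) * leadMat (A i) b c else 0) * (u c).coeff J := by
    by_cases hA : A i = 0
    · simp [hA]
    by_cases hi : (i : ℤ) - matDeg (A i) = n'
    · rw [if_pos ⟨hA, hi⟩, coeff_mul_iterate_derivative_of_eq_top (natDegree_le_matDeg _ b c)
        (hu c) (by omega), ← descPochhammer_eval_eq_prod_range,
        descPochhammer_eval_eq_descFactorial, nsmul_eq_mul, leadMat]
      ring
    · have := hn' i hA
      rw [if_neg fun h => hi h.2, zero_mul]
      exact coeff_mul_iterate_derivative_eq_zero_of_top_lt (natDegree_le_matDeg _ b c) (hu c)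
        (by omega)
  simp only [coeff_apply, hterm, Matrix.mulVec, dotProduct, Dmat, Matrix.sum_apply, sum_mul]
  rw [sum_comm]
  refine sum_congr rfl fun c _ => sum_congr rfl fun i _ => ?_
  split_ifs <;> simp [Matrix.smul_apply]

theorem eq_zero_of_eq_zero (hn : ∀ i, A i ≠ 0 → (i : ℤ) - matNu (A i) ≤ n) (hk : n ≤ k)
    (hL : ∀ j ≥ k, (Lmat A n j).det ≠ 0) (hu : u ∈ Msub N k) (hPu : PopPoly A u = 0) :
    u = 0 := by
  by_contra hu0
  obtain ⟨j, hj, hne⟩ := exists_forall_lt_coeff_eq_zero_and_ne_zero hu0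
  have hkj := le_of_mem_Msub_of_coeff_ne_zero hu hne
  refine hne (Matrix.eq_zero_of_mulVec_eq_zero (hL j hkj) (funext fun b => ?_))
  rw [← coeff_eq_Lmat_mulVec hn hj b (d := ((j : ℤ) - n).toNat) (by omega), hPu]
  rfl

theorem exists_coeff_ne_zero (hn' : ∀ i, A i ≠ 0 → n' ≤ (i : ℤ) - matDeg (A i)) (hk : n' ≤ k)
    (hD : ∀ J ≥ k, (Dmat A n' J).det ≠ 0) (hu : u ∈ Msub N k) (hu0 : u ≠ 0) :
    ∃ b, ∃ d : ℕ, (k : ℤ) - n' ≤ d ∧ (PopPoly A u b).coeff d ≠ 0 := by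
  obtain ⟨J, hdeg, hJ⟩ := exists_forall_natDegree_le_and_ne_zero hu0
  have hkJ := le_of_mem_Msub_of_coeff_ne_zero hu hJ
  obtain ⟨b, hb⟩ := Function.ne_iff.1 (mt (Matrix.eq_zero_of_mulVec_eq_zero (hD J hkJ)) hJ)
  exact ⟨b, ((J : ℤ) - n').toNat, by omega, by rwa [coeff_eq_Dmat_mulVec hn' hdeg b (by omega)]⟩

theorem exists_coeff_sub_eq_zero (hn' : ∀ i, A i ≠ 0 → n' ≤ (i : ℤ) - matDeg (A i))
    (hD : ∀ J ≥ k, (Dmat A n' J).det ≠ 0) (w : Fin N → ℂ[X]) :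
    ∃ u ∈ Msub N k, ∀ c (j : ℕ), (k : ℤ) - n' ≤ j → ((w - PopPoly A u) c).coeff j = 0 := by
  suffices ∀ D : ℕ, ∀ w : Fin N → ℂ[X], (∀ c (j : ℕ), D ≤ j → (w c).coeff j = 0) →
      ∃ u ∈ Msub N k, ∀ c (j : ℕ), (k : ℤ) - n' ≤ j → ((w - PopPoly A u) c).coeff j = 0 from
    this _ w fun c j hj => coeff_eq_zero_of_natDegree_lt <|
      (le_sup (f := fun c => (w c).natDegree) (mem_univ c)).trans_lt hj
  intro D
  induction D with
  | zero => exact fun w hw => ⟨0, zero_mem _, fun c j _ => by simpa using hw c j j.zero_le⟩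
  | succ d ih =>
    intro w hw
    by_cases hdk : (k : ℤ) - n' ≤ d
    · set J := ((d : ℤ) + n').toNat
      set v : Fin N → ℂ := fun c => (w c).coeff d
      set M := Dmat A n' J
      have hM : IsUnit M.det := (hD J (by omega)).isUnit
      set u₀ : Fin N → ℂ[X] := fun c => monomial J ((M⁻¹ *ᵥ v) c)
      have hu₀ : u₀ ∈ Msub N k := fun c j hj => by
        simp only [u₀, Polynomial.coeff_monomial]
        exact if_neg (by omega)
      have hdeg₀ (c : Fin N) : (u₀ c).natDegree ≤ J := natDegree_monomial_le _
      have htop₀ (c : Fin N) : (PopPoly A u₀ c).coeff d = v c := by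
        have hcoeff : (fun c => (u₀ c).coeff J) = M⁻¹ *ᵥ v := by simp [u₀]
        rw [coeff_eq_Dmat_mulVec hn' hdeg₀ c (by omega), hcoeff, Matrix.mulVec_mulVec,
          M.mul_nonsing_inv hM, Matrix.one_mulVec]
      obtain ⟨u₁, hu₁, htop₁⟩ := ih (w - PopPoly A u₀) fun c j hj => by
        obtain rfl | hdj := hj.eq_or_lt
        · simp [htop₀, v]
        · rw [Pi.sub_apply, coeff_sub, hw c j hdj, coeff_eq_zero_of_gt hn' hdeg₀ c (by omega),
            sub_zero]
      refine ⟨u₀ + u₁, add_mem hu₀ hu₁, fun c j hj => ?_⟩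
      rw [map_add, ← sub_sub]
      exact htop₁ c j hj
    · exact ⟨0, zero_mem _, fun c j hj => by simpa using hw c j (by omega)⟩

noncomputable def windowToCokernel (A : Fin (m + 1) → Matrix (Fin N) (Fin N) ℂ[X]) (k κ δ : ℕ) :
    (Fin δ × Fin N → ℂ) →ₗ[ℂ]
      Msub N κ ⧸ (Submodule.map (PopPoly A) (Msub N k)).comap (Msub N κ).subtype :=
  Submodule.mkQ _ ∘ₗ (ofWindowCoeffs N κ δ).codRestrict (Msub N κ) ofWindowCoeffs_mem_Msub

theorem windowToCokernel_injective (hn' : ∀ i, A i ≠ 0 → n' ≤ (i : ℤ) - matDeg (A i))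
    (hD : ∀ J ≥ k, (Dmat A n' J).det ≠ 0) (hδ : ((κ + δ : ℕ) : ℤ) = k - n') :
    Function.Injective (windowToCokernel A k κ δ) := by
  refine (injective_iff_map_eq_zero _).2 fun g hg => ?_
  rw [windowToCokernel, LinearMap.comp_apply, Submodule.mkQ_apply, Submodule.Quotient.mk_eq_zero,
    Submodule.mem_comap] at hg
  obtain ⟨u, hu, hPu⟩ := Submodule.mem_map.1 hg
  have hu0 : u = 0 := by
    by_contra hu0
    obtain ⟨b, d, hd, hne⟩ := exists_coeff_ne_zero hn' (by omega) hD hu hu0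
    exact hne (hPu ▸ coeff_ofWindowCoeffs_eq_zero g b (Or.inr (by omega)))
  apply ofWindowCoeffs_injective (κ := κ)
  rw [map_zero, ← show PopPoly A u = ofWindowCoeffs N κ δ g from hPu, hu0, map_zero]

theorem windowToCokernel_surjective (hn : ∀ i, A i ≠ 0 → (i : ℤ) - matNu (A i) ≤ n)
    (hn' : ∀ i, A i ≠ 0 → n' ≤ (i : ℤ) - matDeg (A i)) (hD : ∀ J ≥ k, (Dmat A n' J).det ≠ 0)
    (hκ : (κ : ℤ) = k - n) (hδ : ((κ + δ : ℕ) : ℤ) = k - n') :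
    Function.Surjective (windowToCokernel A k κ δ) := by
  intro x
  obtain ⟨⟨w, hw⟩, rfl⟩ := Submodule.mkQ_surjective _ x
  obtain ⟨u, hu, htop⟩ := exists_coeff_sub_eq_zero hn' hD w
  have hPu : PopPoly A u ∈ Msub N κ := mem_Msub hn hu hκ.le
  refine ⟨fun p => ((w - PopPoly A u) p.2).coeff (κ + p.1), ?_⟩
  rw [windowToCokernel, LinearMap.comp_apply, Submodule.mkQ_apply, Submodule.mkQ_apply,
    Submodule.Quotient.eq]
  have hr : ofWindowCoeffs N κ δ (fun p => ((w - PopPoly A u) p.2).coeff (κ + p.1)) =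
      w - PopPoly A u :=
    ofWindowCoeffs_coeff (sub_mem hw hPu) fun c j hj => htop c j (by omega)
  rw [Submodule.mem_comap, map_sub, Submodule.subtype_apply, Submodule.subtype_apply,
    LinearMap.codRestrict_apply, hr, sub_sub_cancel_left]
  exact neg_mem (Submodule.mem_map_of_mem hu)

end PopPoly

theorem cokernel_of_restriction_general {N m : ℕ}
    (A : Fin (m + 1) → Matrix (Fin N) (Fin N) (Polynomial ℂ))
    (n n' : ℤ)
    (hn_ub : ∀ i, A i ≠ 0 → (i : ℤ) - matNu (A i) ≤ n)
    (hn_mem : ∃ i, A i ≠ 0 ∧ (i : ℤ) - matNu (A i) = n)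
    (hn'_lb : ∀ i, A i ≠ 0 → n' ≤ (i : ℤ) - matDeg (A i))
    (hl : ∃ k : ℂ, (Lmat A n k).det ≠ 0)
    (hd : ∃ k : ℂ, (Dmat A n' k).det ≠ 0) :
    (∀ k : ℕ, n ≤ (k : ℤ) → ∀ u ∈ Msub N k, PopPoly A u ∈ Msub N ((k : ℤ) - n).toNat) ∧
      ∃ K : ℕ, ∀ k : ℕ, K ≤ k →
        (∀ u ∈ Msub N k, PopPoly A u = 0 → u = 0) ∧
        FiniteDimensional ℂ
          (↥(Msub N ((k : ℤ) - n).toNat) ⧸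
            Submodule.comap (Msub N ((k : ℤ) - n).toNat).subtype
              (Submodule.map (PopPoly A) (Msub N k))) ∧
        (Module.finrank ℂ
            (↥(Msub N ((k : ℤ) - n).toNat) ⧸
              Submodule.comap (Msub N ((k : ℤ) - n).toNat).subtype
                (Submodule.map (PopPoly A) (Msub N k))) : ℤ) = (n - n') * N := by
  refine ⟨fun k hk u hu => PopPoly.mem_Msub hn_ub hu (by omega), ?_⟩
  have hn'n : n' ≤ n := by
    obtain ⟨i, hi, rfl⟩ := hn_mem
    have := hn'_lb i hi
    have := matNu_le_matDeg _ hi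
    omega
  obtain ⟨K, hK⟩ := ((eventually_det_sum_ite_prod_smul_ne_zero _ _ _ hl).and
    (eventually_det_sum_ite_prod_smul_ne_zero _ _ _ hd)).exists_forall_of_atTop
  refine ⟨max K n.toNat, fun k hk => ?_⟩
  have hL : ∀ j ≥ k, (Lmat A n j).det ≠ 0 := fun j hj => (hK j (by omega)).1
  have hD : ∀ j ≥ k, (Dmat A n' j).det ≠ 0 := fun j hj => (hK j (by omega)).2
  have hκ : ((((k : ℤ) - n).toNat : ℕ) : ℤ) = k - n := by omega
  have hδ : ((((k : ℤ) - n).toNat + (n - n').toNat : ℕ) : ℤ) = k - n' := by omega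
  let e := LinearEquiv.ofBijective _ ⟨PopPoly.windowToCokernel_injective hn'_lb hD hδ,
    PopPoly.windowToCokernel_surjective hn_ub hn'_lb hD hκ hδ⟩
  refine ⟨fun u hu hPu => PopPoly.eq_zero_of_eq_zero hn_ub (by omega) hL hu hPu,
    e.finiteDimensional, ?_⟩
  rw [← e.finrank_eq, Module.finrank_fintype_fun_eq_card, Fintype.card_prod, Fintype.card_fin,
    Fintype.card_fin, Nat.cast_mul, Int.toNat_of_nonneg (by omega)]

/-- **Lemma 1.** If `l(k)` and `d(k)` are not identically zero, then `P` maps `M(k)^N`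
into `M(k-n)^N` for `k ≥ n`, and for `k` large enough this restriction
`P : M(k)^N → M(k-n)^N` is injective with cokernel of dimension `(n - n')·N`. -/
theorem cokernel_of_restriction {N m : ℕ} (hN : 1 ≤ N)
    (A : Fin (m + 1) → Matrix (Fin N) (Fin N) (Polynomial ℂ))
    (hAm : (A (Fin.last m)).det ≠ 0)
    (n n' : ℤ)
    (hn_ub : ∀ i, A i ≠ 0 → (i : ℤ) - matNu (A i) ≤ n)
    (hn_mem : ∃ i, A i ≠ 0 ∧ (i : ℤ) - matNu (A i) = n)
    (hn'_lb : ∀ i, A i ≠ 0 → n' ≤ (i : ℤ) - matDeg (A i))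
    (hn'_mem : ∃ i, A i ≠ 0 ∧ (i : ℤ) - matDeg (A i) = n')
    (hl : ∃ k : ℂ, (Lmat A n k).det ≠ 0)
    (hd : ∃ k : ℂ, (Dmat A n' k).det ≠ 0) :
    (∀ k : ℕ, n ≤ (k : ℤ) → ∀ u ∈ Msub N k, PopPoly A u ∈ Msub N ((k : ℤ) - n).toNat) ∧
      ∃ K : ℕ, ∀ k : ℕ, K ≤ k →
        (∀ u ∈ Msub N k, PopPoly A u = 0 → u = 0) ∧
        FiniteDimensional ℂ
          (↥(Msub N ((k : ℤ) - n).toNat) ⧸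
            Submodule.comap (Msub N ((k : ℤ) - n).toNat).subtype
              (Submodule.map (PopPoly A) (Msub N k))) ∧
        (Module.finrank ℂ
            (↥(Msub N ((k : ℤ) - n).toNat) ⧸
              Submodule.comap (Msub N ((k : ℤ) - n).toNat).subtype
                (Submodule.map (PopPoly A) (Msub N k))) : ℤ) = (n - n') * N :=
  cokernel_of_restriction_general A n n' hn_ub hn_mem hn'_lb hl hd
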